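/- Let R be a commutative ring, n ≥ 1, and let M ∈ GL_n(R) with inverse N = M^{-1}. Then the ideal of R generated by the off-diagonal entries of the first row of M, i.e. ⟨M_{1,2}, …, M_{1,n}⟩, equals the ideal generated by the off-diagonal entries of the first row of N, i.e. ⟨N_{1,2}, …, N_{1,n}⟩. -/

import Mathlib

/-!
Modulo the ideal `I` spanned by the off-diagonal entries of row `i` of `N`, that row becomes
`N i i • eᵢ`, so row `i` of `N * M = 1` reads `N i i • (row i of M) = eᵢ`. Hence `N i i` is a
unit mod `I` that kills the off-diagonal entries of row `i` of `M`, which therefore lie in `I`.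
Exchanging `M` and `N` gives the reverse inclusion.
-/

namespace Matrix

variable {ι R : Type*} [Fintype ι] [CommRing R]

theorem mul_apply_of_row_eq_zero_off_diag {M N : Matrix ι ι R} {i : ι}
    (hN : ∀ j ≠ i, N i j = 0) (k : ι) : (N * M) i k = N i i * M i k := by
  rw [mul_apply]
  exact Fintype.sum_eq_single i fun j hj => by rw [hN j hj, zero_mul]

theorem row_eq_zero_off_diag_of_mul_eq_one [DecidableEq ι] {M N : Matrix ι ι R}
    (hNM : N * M = 1) {i : ι} (hN : ∀ j ≠ i, N i j = 0) : ∀ j ≠ i, M i j = 0 := by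
  intro j hj
  have hdiag : N i i * M i i = 1 := by
    rw [← mul_apply_of_row_eq_zero_off_diag hN, hNM, one_apply_eq]
  have hoff : N i i * M i j = 0 := by
    rw [← mul_apply_of_row_eq_zero_off_diag hN, hNM, one_apply_ne hj.symm]
  calc M i j = M i i * (N i i * M i j) := by
        rw [← mul_assoc, mul_comm (M i i), hdiag, one_mul]
    _ = 0 := by rw [hoff, mul_zero]

theorem span_row_off_diag_le_of_mul_eq_one [DecidableEq ι] {M N : Matrix ι ι R}
    (hNM : N * M = 1) (i : ι) :
    Ideal.span {x : R | ∃ j : ι, j ≠ i ∧ x = M i j} ≤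
      Ideal.span {x : R | ∃ j : ι, j ≠ i ∧ x = N i j} := by
  set I := Ideal.span {x : R | ∃ j : ι, j ≠ i ∧ x = N i j}
  let π := Ideal.Quotient.mk I
  have hmap : N.map π * M.map π = 1 := by
    rw [← Matrix.map_mul, hNM, Matrix.map_one _ (map_zero π) (map_one π)]
  have hN : ∀ j ≠ i, N.map π i j = 0 := fun j hj =>
    Ideal.Quotient.eq_zero_iff_mem.mpr (Ideal.subset_span ⟨j, hj, rfl⟩)
  rw [Ideal.span_le]
  rintro _ ⟨j, hj, rfl⟩
  exact Ideal.Quotient.eq_zero_iff_mem.mp (row_eq_zero_off_diag_of_mul_eq_one hmap hN j hj)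

end Matrix

/-- For an invertible matrix `M` with inverse `N`, the ideal generated by the
off-diagonal entries of the first row of `M` equals the ideal generated by the
off-diagonal entries of the first row of `N`. -/
theorem stmt1 {R : Type*} [CommRing R] {n : ℕ}
    (M N : Matrix (Fin (n + 1)) (Fin (n + 1)) R)
    (hMN : M * N = 1) (hNM : N * M = 1) :
    Ideal.span {x : R | ∃ j : Fin (n + 1), j ≠ 0 ∧ x = M 0 j} =
      Ideal.span {x : R | ∃ j : Fin (n + 1), j ≠ 0 ∧ x = N 0 j} :=
  le_antisymm (Matrix.span_row_off_diag_le_of_mul_eq_one hNM 0)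
    (Matrix.span_row_off_diag_le_of_mul_eq_one hMN 0)
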